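/- Let 𝔜 be a family of metric spaces, let Y ∈ 𝔜, and suppose that every member of 𝔜 embeds isometrically into Y (i.e. Y is 𝔜-universal). Then the following are equivalent: (i) Y is not shifted; (ii) Y is minimal 𝔜-universal; (iii) there exists a minimal 𝔜-universal metric space X with X ∈ 𝔜; (iv) there exists a minimal 𝔜-universal metric space. -/

import Mathlib

universe u v w

open Function Set

/-- `f` is an isometric (distance-preserving) embedding of metric spaces. -/
def IsIsomEmb {X : Type u} {Y : Type v} [MetricSpace X] [MetricSpace Y] (f : X → Y) : Prop :=
  ∀ a b : X, dist (f a) (f b) = dist a b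

/-- `X` embeds isometrically into `Y`. -/
def IsomEmbeds (X : Type u) (Y : Type v) [MetricSpace X] [MetricSpace Y] : Prop :=
  ∃ f : X → Y, IsIsomEmb f

/-- `X` and `Y` are isometric: there is a surjective isometric embedding of `X` onto `Y`. -/
def IsIsometricTo (X : Type u) (Y : Type v) [MetricSpace X] [MetricSpace Y] : Prop :=
  ∃ f : X → Y, IsIsomEmb f ∧ Surjective f

/-- `X` is not shifted: every isometric self-embedding of `X` is surjective. -/
def NotShifted (X : Type u) [MetricSpace X] : Prop :=
  ∀ f : X → X, IsIsomEmb f → Surjective f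

/-- `Y` is universal for the family `M` of metric spaces. -/
def UnivFor {ι : Type w} (M : ι → Type u) [∀ i, MetricSpace (M i)]
    (Y : Type v) [MetricSpace Y] : Prop :=
  ∀ i, IsomEmbeds (M i) Y

/-- `Y` is minimal universal for the family `M` of metric spaces: `Y` is `M`-universal and
every subset of `Y` (with the induced metric) which is `M`-universal equals `Y`. -/
def MinUnivFor {ι : Type w} (M : ι → Type u) [∀ i, MetricSpace (M i)]
    (Y : Type v) [MetricSpace Y] : Prop :=
  UnivFor M Y ∧ ∀ S : Set Y, UnivFor M ↥S → S = Set.univ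

/-
The isometric image of an `M`-universal space is `M`-universal, so a minimal universal space
is not shifted. Conversely, a universal member `Y` of the family embeds into each universal
subset of itself, which is therefore all of `Y` when `Y` is not shifted. Minimality passes
from `X` to any universal `Y` embedding into `X`, since the image of a universal subset of `Y`
is universal; a universal member of the family embeds into every universal space.
-/

namespace IsIsomEmb

variable {X : Type u} {Y : Type v} {Z : Type w} [MetricSpace X] [MetricSpace Y] [MetricSpace Z]

theorem injective {f : X → Y} (hf : IsIsomEmb f) : Injective f :=
  (isometry_iff_dist_eq.2 hf).injective

theorem comp {g : Y → Z} {f : X → Y} (hg : IsIsomEmb g) (hf : IsIsomEmb f) :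
    IsIsomEmb (g ∘ f) :=
  fun a b => (hg _ _).trans (hf a b)

theorem subtype_val (s : Set X) : IsIsomEmb ((↑) : s → X) :=
  fun _ _ => rfl

end IsIsomEmb

section Universal

variable {ι : Type w} {M : ι → Type u} [∀ i, MetricSpace (M i)]
  {X : Type v} {Y : Type*} [MetricSpace X] [MetricSpace Y]

theorem UnivFor.trans (hX : UnivFor M X) (hXY : IsomEmbeds X Y) : UnivFor M Y := by
  intro i
  obtain ⟨f, hf⟩ := hX i
  obtain ⟨g, hg⟩ := hXY
  exact ⟨g ∘ f, hg.comp hf⟩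

theorem UnivFor.range {f : X → Y} (hX : UnivFor M X) (hf : IsIsomEmb f) :
    UnivFor M (range f) :=
  hX.trans ⟨rangeFactorization f, hf⟩

theorem MinUnivFor.notShifted (hX : MinUnivFor M X) : NotShifted X :=
  fun _ hf => range_eq_univ.1 (hX.2 _ (hX.1.range hf))

theorem NotShifted.minUnivFor {i₀ : ι} (hns : NotShifted (M i₀)) (huniv : UnivFor M (M i₀)) :
    MinUnivFor M (M i₀) := by
  refine ⟨huniv, fun S hS => eq_univ_of_forall fun y => ?_⟩
  obtain ⟨g, hg⟩ := hS i₀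
  obtain ⟨x, rfl⟩ := hns _ ((IsIsomEmb.subtype_val S).comp hg) y
  exact (g x).2

theorem MinUnivFor.of_isomEmbeds (hX : MinUnivFor M X) (hY : UnivFor M Y)
    (hYX : IsomEmbeds Y X) : MinUnivFor M Y := by
  obtain ⟨h, hh⟩ := hYX
  refine ⟨hY, fun S hS => eq_univ_of_forall fun y => ?_⟩
  have hrange : range (h ∘ ((↑) : S → Y)) = univ :=
    hX.2 _ (hS.range (hh.comp (IsIsomEmb.subtype_val S)))
  obtain ⟨s, hs⟩ := hrange.symm ▸ mem_univ (h y)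
  exact hh.injective hs ▸ s.2

end Universal

theorem statement1 {ι : Type w} (M : ι → Type u) [instM : ∀ i, MetricSpace (M i)]
    (i₀ : ι) (huniv : UnivFor M (M i₀)) :
    (NotShifted (M i₀) ↔ MinUnivFor M (M i₀)) ∧
    (MinUnivFor M (M i₀) ↔ ∃ j, MinUnivFor M (M j)) ∧
    ((∃ j, MinUnivFor M (M j)) ↔
      ∃ (X : Type u) (instX : MetricSpace X), @MinUnivFor ι M instM X instX) :=
  ⟨⟨fun hns => hns.minUnivFor huniv, MinUnivFor.notShifted⟩,
    ⟨fun h => ⟨i₀, h⟩, fun ⟨_, hj⟩ => hj.of_isomEmbeds huniv (hj.1 i₀)⟩,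
    ⟨fun ⟨j, hj⟩ => ⟨M j, inferInstance, hj⟩,
      fun ⟨_, _, hX⟩ => ⟨i₀, hX.of_isomEmbeds huniv (hX.1 i₀)⟩⟩⟩
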